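/- Let f : Fin n → Fin k be a function with Young stabilizer S_f, let λ_l = |f⁻¹(l)|, fix two distinct elements a, b ∈ Fin n and two distinct indices i, j ∈ Fin k with λ_i ≥ 1 and λ_j ≥ 1. Then the number of right cosets [g] of S_f in Perm (Fin n) with f(g(a)) = i and f(g(b)) = j equals (n−2)! / ((λ_i − 1)! · (λ_j − 1)! · ∏_{l ∉ {i,j}} (λ_l)!). -/

import Mathlib

/-!
The condition `f (g a) = i ∧ f (g b) = j` is invariant under `g ↦ σ * g` for `σ ∈ S_f`, so the
permutations satisfying it form a union of right cosets, each of size `|S_f| = ∏ l, λ_l!`.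
They are counted directly: `g a` ranges over `f⁻¹(i)`, `g b` over `f⁻¹(j)`, and `g` is then
an arbitrary bijection between the remaining `n - 2` points, giving `λ_i * λ_j * (n - 2)!`.
Cancelling `λ_i * λ_j` against `λ_i! * λ_j!` leaves the stated quotient.
-/

open Finset

def youngStabilizer (n k : ℕ) (f : Fin n → Fin k) : Subgroup (Equiv.Perm (Fin n)) where
  carrier := {σ : Equiv.Perm (Fin n) | f ∘ ⇑σ = f}
  one_mem' := by
    funext i
    simp
  mul_mem' := by
    intro σ τ hσ hτ
    funext i
    have h1 := congrFun hσ (τ i)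
    have h2 := congrFun hτ i
    simp only [Function.comp_apply] at h1 h2 ⊢
    simp [Equiv.Perm.mul_apply, h1, h2]
  inv_mem' := by
    intro σ hσ
    funext i
    have h1 := congrFun hσ (σ⁻¹ i)
    simp only [Function.comp_apply, Equiv.Perm.inv_def, Equiv.apply_symm_apply] at h1 ⊢
    exact h1.symm

open Nat

namespace QuotientGroup

variable {G : Type*} [Group G]

theorem card_preimage_mk_rightRel (H : Subgroup G) (t : Set (Quotient (rightRel H))) :
    Nat.card (Quotient.mk (rightRel H) ⁻¹' t) = Nat.card H * Nat.card t := by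
  let e := quotientRightRelEquivQuotientLeftRel H
  have hinv : Quotient.mk (rightRel H) ⁻¹' t ≃ QuotientGroup.mk ⁻¹' (e '' t) :=
    (Equiv.inv G).subtypeEquiv fun g => e.injective.mem_set_image.symm
  rw [Nat.card_congr (hinv.trans (preimageMkEquivSubgroupProdSet H (e '' t))), Nat.card_prod,
    Nat.card_image_of_injective e.injective]

theorem card_eq_card_mul_card_rightCosets (H : Subgroup G) {P : G → Prop}
    (hP : ∀ h ∈ H, ∀ g, P g → P (h * g)) :
    Nat.card {g // P g} =
      Nat.card H * Nat.card {c : Quotient (rightRel H) // ∃ g, Quotient.mk _ g = c ∧ P g} := by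
  have hset : {g | P g} = Quotient.mk (rightRel H) ⁻¹' {c | ∃ g, Quotient.mk _ g = c ∧ P g} := by
    ext g
    refine ⟨fun hg => ⟨g, rfl, hg⟩, ?_⟩
    rintro ⟨g', hg', hPg'⟩
    simpa using hP _ (rightRel_apply.mp (Quotient.exact hg')) g' hPg'
  exact (congrArg (fun s : Set G => Nat.card s) hset).trans (card_preimage_mk_rightRel H _)

end QuotientGroup

theorem Fintype.card_subtype_ne_and_ne {α : Type*} [DecidableEq α] [Fintype α] {a b : α}
    (hab : a ≠ b) : Fintype.card {z // z ≠ a ∧ z ≠ b} = Fintype.card α - 2 := by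
  have : ({z | z ≠ a ∧ z ≠ b} : Finset α) = {a, b}ᶜ := by ext; simp
  rw [Fintype.card_subtype, this, card_compl, card_pair hab]

namespace Equiv.Perm

variable {α : Type*} [DecidableEq α] [Fintype α]

theorem card_apply_eq_and_apply_eq {a b x y : α} (hab : a ≠ b) (hxy : x ≠ y) :
    Fintype.card {g : Perm α // g a = x ∧ g b = y} = (Fintype.card α - 2)! := by
  obtain ⟨g₀, hg₀⟩ := exists_extending_pair ![a, b] ![x, y] (by simpa) (by simpa)
  have h₀a : g₀ a = x := hg₀ 0
  have h₀b : g₀ b = y := hg₀ 1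
  have e : {g : Perm α // g a = x ∧ g b = y} ≃ {h : Perm α // h a = a ∧ h b = b} :=
    (Equiv.mulLeft g₀⁻¹).subtypeEquiv fun g => by
      simp [Equiv.symm_apply_eq, h₀a, h₀b]
  have e' : {h : Perm α // h a = a ∧ h b = b} ≃
      {h : Perm α // ∀ z, ¬(z ≠ a ∧ z ≠ b) → h z = z} :=
    Equiv.subtypeEquivRight fun h => by
      refine ⟨fun ⟨ha, hb⟩ z hz => ?_, fun H => ⟨H a (by simp), H b (by simp)⟩⟩
      obtain rfl | rfl : z = a ∨ z = b := by tauto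
      exacts [ha, hb]
  rw [Fintype.card_congr ((e.trans e').trans (Perm.subtypeEquivSubtypePerm _).symm),
    Fintype.card_perm, Fintype.card_subtype_ne_and_ne hab]

theorem card_comp_apply_eq_and_comp_apply_eq {β : Type*} [DecidableEq β] (f : α → β) {a b : α}
    (hab : a ≠ b) {i j : β} (hij : i ≠ j) :
    Fintype.card {g : Perm α // f (g a) = i ∧ f (g b) = j} =
      Fintype.card {x // f x = i} * Fintype.card {y // f y = j} * (Fintype.card α - 2)! := by
  let e : {g : Perm α // f (g a) = i ∧ f (g b) = j} ≃
      Σ p : {x // f x = i} × {y // f y = j}, {g : Perm α // g a = p.1 ∧ g b = p.2} :=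
    { toFun g := ⟨(⟨g.1 a, g.2.1⟩, ⟨g.1 b, g.2.2⟩), g, rfl, rfl⟩
      invFun q := ⟨q.2, by rw [q.2.2.1, q.2.2.2]; exact ⟨q.1.1.2, q.1.2.2⟩⟩
      left_inv _ := rfl
      right_inv q :=
        Sigma.subtype_ext (Prod.ext (Subtype.ext q.2.2.1) (Subtype.ext q.2.2.2)) rfl }
  have hxy (p : {x // f x = i} × {y // f y = j}) : (p.1 : α) ≠ p.2 := fun h =>
    hij (p.1.2.symm.trans ((congrArg f h).trans p.2.2))
  rw [Fintype.card_congr e, Fintype.card_sigma,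
    sum_congr rfl fun p _ => card_apply_eq_and_apply_eq hab (hxy p), sum_const, Finset.card_univ,
    Fintype.card_prod, smul_eq_mul]

end Equiv.Perm

theorem prod_factorial_eq_mul_mul_factorial_pred {ι : Type*} [Fintype ι] [DecidableEq ι]
    (m : ι → ℕ) {i j : ι} (hij : i ≠ j) (hi : 1 ≤ m i) (hj : 1 ≤ m j) :
    ∏ l, (m l)! =
      m i * m j * ((m i - 1)! * (m j - 1)! * ∏ l ∈ (univ.erase i).erase j, (m l)!) := by
  rw [← mul_prod_erase univ _ (mem_univ i),
    ← mul_prod_erase _ _ (mem_erase.mpr ⟨hij.symm, mem_univ j⟩),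
    ← Nat.mul_factorial_pred (by omega : m i ≠ 0), ← Nat.mul_factorial_pred (by omega : m j ≠ 0)]
  ring

section youngStabilizer

variable {n k : ℕ} (f : Fin n → Fin k)

theorem comp_mul_apply_of_mem_youngStabilizer {σ : Equiv.Perm (Fin n)}
    (hσ : σ ∈ youngStabilizer n k f) (g : Equiv.Perm (Fin n)) (x : Fin n) :
    f ((σ * g) x) = f (g x) :=
  congrFun hσ (g x)

theorem card_youngStabilizer :
    Nat.card (youngStabilizer n k f) = ∏ l, (#{x | f x = l})! := by
  show Nat.card {g : Equiv.Perm (Fin n) // f ∘ g = f} = _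
  rw [Nat.card_eq_fintype_card, DomMulAct.stabilizer_card]
  simp only [Fintype.card_subtype]

end youngStabilizer

/-- For distinct `a, b` and distinct indices `i ≠ j` with nonempty fibers, the number of
right cosets `[g]` of the Young stabilizer with `f (g a) = i` and `f (g b) = j` equals
`(n-2)! / ((λ_i - 1)! * (λ_j - 1)! * ∏_{l ∉ {i,j}} (λ_l)!)`. -/
theorem stmt3 (n k : ℕ) (f : Fin n → Fin k) (a b : Fin n) (hab : a ≠ b) (i j : Fin k)
    (hij : i ≠ j)
    (hi : 1 ≤ (Finset.univ.filter fun x => f x = i).card)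
    (hj : 1 ≤ (Finset.univ.filter fun x => f x = j).card) :
    Nat.card {c : Quotient (QuotientGroup.rightRel (youngStabilizer n k f)) //
        ∃ g : Equiv.Perm (Fin n),
          Quotient.mk (QuotientGroup.rightRel (youngStabilizer n k f)) g = c ∧
            f (g a) = i ∧ f (g b) = j} =
      Nat.factorial (n - 2) /
        (Nat.factorial ((Finset.univ.filter fun x => f x = i).card - 1) *
          Nat.factorial ((Finset.univ.filter fun x => f x = j).card - 1) *
          ∏ l ∈ (Finset.univ.erase i).erase j,
            Nat.factorial ((Finset.univ.filter fun x => f x = l).card)) := by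
  have hstab :=
    (card_youngStabilizer f).trans (prod_factorial_eq_mul_mul_factorial_pred _ hij hi hj)
  have hperm : Nat.card {g : Equiv.Perm (Fin n) // f (g a) = i ∧ f (g b) = j} =
      #{x | f x = i} * #{x | f x = j} * (n - 2)! := by
    rw [Nat.card_eq_fintype_card, Equiv.Perm.card_comp_apply_eq_and_comp_apply_eq f hab hij,
      Fintype.card_fin, Fintype.card_subtype, Fintype.card_subtype]
  have hcosets := QuotientGroup.card_eq_card_mul_card_rightCosets (youngStabilizer n k f)
    fun σ hσ g (hg : f (g a) = i ∧ f (g b) = j) => by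
      simpa only [comp_mul_apply_of_mem_youngStabilizer f hσ] using hg
  rw [hperm, hstab] at hcosets
  refine (Nat.div_eq_of_eq_mul_left (by positivity) ?_).symm
  exact Nat.eq_of_mul_eq_mul_left (Nat.mul_pos hi hj) (hcosets.trans (by ring))
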